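/- arXiv:math/0412020 — 4 statements merged into one kernel-verified Lean document; each statement's English description precedes it below -/
import Mathlib

section
/- For every $n\ge 1$, the closed $n$-cube $[0,1]^n$ can be covered by finitely many closed sets, each of diameter at most $1+\epsilon$ (for any given $\epsilon>0$), such that every point lies in at most $n$ of the sets. -/
open Metric Set

/-!
Keep the first coordinate whole and cut the other `d = n - 1` coordinates, rescaled to `[0, N]`,
into one-dimensional pieces of two kinds: an interval of radius `e` around a grid point, or the
middle `[a + 2e, a + 1 - 2e]` of a grid interval. Pieces of one radius are pairwise disjoint.
A brick is a product of pieces whose common radius `e_j = 2^{-(j+2)}` is fixed by the number `j`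
of middle parts, its level; it has diameter at most `√(1 + d / N²)`. Bricks of one level are
disjoint, so a point lies in at most one brick of each level `0, …, d`. Every point is covered:
pigeonholing the distances of the `d` coordinates to the grid against the scales `e_j`, some
level `j` has exactly `j` coordinates farther than `e_j` from the grid, all of them even farther
than `2 e_j`.
-/

lemma exists_card_filter_lt_eq_of_gap {ι : Type*} [Fintype ι] (g : ι → ℝ) {r : ℕ → ℝ}
    (hr : Antitone r) (hr2 : ∀ j, 2 * r (j + 1) ≤ r j) :
    ∃ j, (Finset.univ.filter fun i => r j < g i).card = j ∧
      ∀ i, r j < g i → 2 * r j ≤ g i := by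
  set S : ℕ → Finset ι := fun j => Finset.univ.filter fun i => r j < g i
  have hmem : ∀ j i, i ∈ S j ↔ r j < g i := by simp [S]
  have hS : Monotone S := fun j k hjk i => by
    simp only [hmem]
    exact (hr hjk).trans_lt
  have hex : ∃ j, (S j).card ≤ j := ⟨Fintype.card ι, Finset.card_le_univ _⟩
  have hmin := @Nat.find_min _ _ hex
  have hle : (S (Nat.find hex)).card ≤ Nat.find hex := Nat.find_spec hex
  cases hj : Nat.find hex with
  | zero =>
    have hS0 : S 0 = ∅ := Finset.card_eq_zero.mp (Nat.le_zero.mp (hj ▸ hle))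
    refine ⟨0, (by rw [hS0]; rfl : (S 0).card = 0), fun i hi => ?_⟩
    exact absurd (hS0 ▸ (hmem 0 i).mpr hi) (Finset.notMem_empty i)
  | succ k =>
    rw [hj] at hle hmin
    have hk : k + 1 ≤ (S k).card := not_le.mp (hmin (Nat.lt_succ_self k))
    have heq : S k = S (k + 1) := Finset.eq_of_subset_of_card_le (hS k.le_succ) (by omega)
    refine ⟨k + 1, (le_antisymm hle (heq ▸ hk) : (S (k + 1)).card = k + 1), fun i hi => ?_⟩
    have : r k < g i := (hmem k i).mp (heq ▸ (hmem (k + 1) i).mpr hi)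
    linarith [hr2 k]

lemma EuclideanSpace.dist_le_sqrt_of_forall_abs_sub_le {ι : Type*} [Fintype ι]
    {x y : EuclideanSpace ℝ ι} {a : ι → ℝ} (h : ∀ i, |x i - y i| ≤ a i) :
    dist x y ≤ √(∑ i, a i ^ 2) := by
  rw [EuclideanSpace.dist_eq]
  gcongr with i
  rw [Real.dist_eq]
  exact h i

namespace LebesgueSharp

def piece (e : ℝ) {N : ℕ} : Fin (N + 1) ⊕ Fin N → Set ℝ
  | .inl v => Icc ((v : ℕ) - e) ((v : ℕ) + e)
  | .inr a => Icc ((a : ℕ) + 2 * e) ((a : ℕ) + 1 - 2 * e)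

variable {e : ℝ} {N d : ℕ}

lemma isClosed_piece (p : Fin (N + 1) ⊕ Fin N) : IsClosed (piece e p) := by
  cases p <;> exact isClosed_Icc

lemma abs_sub_le_one_of_mem_piece (he : 0 ≤ e) (he' : 2 * e ≤ 1) {p : Fin (N + 1) ⊕ Fin N}
    {s t : ℝ} (hs : s ∈ piece e p) (ht : t ∈ piece e p) : |s - t| ≤ 1 := by
  cases p <;> simp only [piece, mem_Icc] at hs ht <;> rw [abs_le] <;> constructor <;> linarith

lemma eq_of_mem_piece (he : 0 < e) (he' : 2 * e < 1) {p q : Fin (N + 1) ⊕ Fin N} {s : ℝ}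
    (hp : s ∈ piece e p) (hq : s ∈ piece e q) : p = q := by
  have le_of_cast_lt_succ : ∀ m n : ℕ, (m : ℝ) < n + 1 → m ≤ n := fun m n h =>
    Nat.lt_succ_iff.mp (by exact_mod_cast h)
  rcases p with v | a <;> rcases q with w | b <;> simp only [piece, mem_Icc] at hp hq
  · have h1 := le_of_cast_lt_succ v w (by linarith)
    have h2 := le_of_cast_lt_succ w v (by linarith)
    exact congrArg _ (Fin.ext (le_antisymm h1 h2))
  · have h1 := le_of_cast_lt_succ v b (by linarith)
    have h2 := le_of_cast_lt_succ (b + 1) v (by push_cast; linarith)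
    omega
  · have h1 := le_of_cast_lt_succ w a (by linarith)
    have h2 := le_of_cast_lt_succ (a + 1) w (by push_cast; linarith)
    omega
  · have h1 := le_of_cast_lt_succ a b (by linarith)
    have h2 := le_of_cast_lt_succ b a (by linarith)
    exact congrArg _ (Fin.ext (le_antisymm h1 h2))

lemma exists_mem_piece_inl {s : ℝ} (hs : s ∈ Icc 0 (N : ℝ)) (h : |s - round s| ≤ e) :
    ∃ v : Fin (N + 1), s ∈ piece e (.inl v) := by
  have h0 : (-1 : ℝ) < round s := by linarith [sub_half_lt_round s, hs.1]
  have hN : (round s : ℝ) < N + 1 := by linarith [round_le_add_half s, hs.2]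
  have h0' : (-1 : ℤ) < round s := by exact_mod_cast h0
  lift round s to ℕ using by omega with v
  refine ⟨⟨v, by exact_mod_cast hN⟩, ?_⟩
  push_cast at h
  rw [abs_le] at h
  constructor <;> linarith

lemma exists_mem_piece_inr (he : 0 < e) {s : ℝ} (hs : s ∈ Icc 0 (N : ℝ))
    (h : 2 * e ≤ |s - round s|) : ∃ a : Fin N, s ∈ piece e (.inr a) := by
  rw [abs_sub_round_eq_min, le_min_iff, Int.fract] at h
  have hsN : s < N := by
    refine hs.2.lt_of_ne fun hsN => ?_
    rw [hsN, Int.floor_natCast] at h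
    push_cast at h
    linarith
  have hN : ⌊s⌋ < N := Int.floor_lt.mpr (by exact_mod_cast hsN)
  lift ⌊s⌋ to ℕ using Int.floor_nonneg.mpr hs.1 with a
  refine ⟨⟨a, by exact_mod_cast hN⟩, ?_⟩
  push_cast at h
  constructor <;> linarith

noncomputable def radius (j : ℕ) : ℝ := 2⁻¹ ^ (j + 2)

lemma radius_pos (j : ℕ) : 0 < radius j := by unfold radius; positivity

lemma two_mul_radius_lt_one (j : ℕ) : 2 * radius j < 1 := by
  unfold radius
  calc 2 * (2⁻¹ : ℝ) ^ (j + 2) = 2⁻¹ ^ (j + 1) := by rw [pow_succ _ (j + 1)]; ring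
    _ < 1 := pow_lt_one₀ (by norm_num) (by norm_num) (by omega)

lemma radius_antitone : Antitone radius :=
  fun _ _ h => pow_le_pow_of_le_one (by norm_num) (by norm_num) (by omega)

lemma two_mul_radius_succ (j : ℕ) : 2 * radius (j + 1) = radius j := by
  unfold radius; rw [pow_succ _ (j + 2)]; ring

def level (c : Fin d → Fin (N + 1) ⊕ Fin N) : ℕ :=
  (Finset.univ.filter fun i => (c i).isRight).card

lemma level_le (c : Fin d → Fin (N + 1) ⊕ Fin N) : level c ≤ d :=
  (Finset.card_le_univ _).trans_eq (Fintype.card_fin d)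

def brick (c : Fin d → Fin (N + 1) ⊕ Fin N) :
    Set (EuclideanSpace ℝ (Fin (d + 1))) :=
  {x | (∀ i, x i ∈ Icc 0 1) ∧ ∀ i : Fin d, N * x i.succ ∈ piece (radius (level c)) (c i)}

lemma isClosed_brick (c : Fin d → Fin (N + 1) ⊕ Fin N) : IsClosed (brick c) := by
  simp only [brick, ofPred_and, ofPred_forall]
  exact (isClosed_iInter fun i => isClosed_Icc.preimage (by fun_prop)).inter
    (isClosed_iInter fun i => (isClosed_piece _).preimage (by fun_prop))

lemma dist_le_of_mem_brick (hN : 0 < N) {c : Fin d → Fin (N + 1) ⊕ Fin N}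
    {x y : EuclideanSpace ℝ (Fin (d + 1))} (hx : x ∈ brick c) (hy : y ∈ brick c) :
    dist x y ≤ √(1 + d / N ^ 2) := by
  have hN' : (0 : ℝ) < N := by exact_mod_cast hN
  have hbound :
      ∀ i, |x i - y i| ≤ (Fin.cons 1 fun _ => (N : ℝ)⁻¹ : Fin (d + 1) → ℝ) i := by
    refine Fin.cases ?_ (fun i => ?_)
    · obtain ⟨hx0, hx1⟩ := hx.1 0
      obtain ⟨hy0, hy1⟩ := hy.1 0
      rw [Fin.cons_zero, abs_le]
      constructor <;> linarith
    · have h := abs_sub_le_one_of_mem_piece (radius_pos _).le (two_mul_radius_lt_one _).le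
        (hx.2 i) (hy.2 i)
      rwa [← mul_sub, abs_mul, abs_of_pos hN', ← le_div_iff₀' hN', one_div] at h
  refine (EuclideanSpace.dist_le_sqrt_of_forall_abs_sub_le hbound).trans_eq ?_
  simp [Fin.sum_univ_succ, div_eq_mul_inv]

lemma eq_of_mem_brick {c₁ c₂ : Fin d → Fin (N + 1) ⊕ Fin N}
    (hlevel : level c₁ = level c₂) {x : EuclideanSpace ℝ (Fin (d + 1))}
    (h₁ : x ∈ brick c₁) (h₂ : x ∈ brick c₂) : c₁ = c₂ :=
  funext fun i => eq_of_mem_piece (radius_pos _) (two_mul_radius_lt_one _) (h₁.2 i)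
    (hlevel ▸ h₂.2 i)

lemma card_le_of_forall_mem_brick (x : EuclideanSpace ℝ (Fin (d + 1)))
    (s : Finset (Fin d → Fin (N + 1) ⊕ Fin N)) (hs : ∀ c ∈ s, x ∈ brick c) :
    s.card ≤ d + 1 := by
  calc s.card ≤ (Finset.range (d + 1)).card :=
        Finset.card_le_card_of_injOn level
          (fun c _ => Finset.mem_range.mpr (Nat.lt_succ_of_le (level_le c)))
          (fun c₁ h₁ c₂ h₂ h => eq_of_mem_brick h (hs c₁ h₁) (hs c₂ h₂))
    _ = d + 1 := Finset.card_range _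

lemma exists_mem_brick {x : EuclideanSpace ℝ (Fin (d + 1))} (hx : ∀ i, x i ∈ Icc 0 1) :
    ∃ c : Fin d → Fin (N + 1) ⊕ Fin N, x ∈ brick c := by
  set s : Fin d → ℝ := fun i => N * x i.succ
  have hs : ∀ i, s i ∈ Icc 0 (N : ℝ) := fun i => by
    have := hx i.succ
    simp only [mem_Icc] at this ⊢
    constructor <;> nlinarith [(Nat.cast_nonneg N : (0 : ℝ) ≤ N)]
  obtain ⟨j, hcard, hgap⟩ := exists_card_filter_lt_eq_of_gap (fun i => |s i - round (s i)|)
    radius_antitone (fun j => (two_mul_radius_succ j).le)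
  have hpiece : ∀ i, ∃ p : Fin (N + 1) ⊕ Fin N, s i ∈ piece (radius j) p ∧
      (p.isRight ↔ radius j < |s i - round (s i)|) := fun i => by
    by_cases hi : radius j < |s i - round (s i)|
    · obtain ⟨a, ha⟩ := exists_mem_piece_inr (radius_pos j) (hs i) (hgap i hi)
      exact ⟨.inr a, ha, by simp [hi]⟩
    · obtain ⟨v, hv⟩ := exists_mem_piece_inl (hs i) (not_lt.mp hi)
      exact ⟨.inl v, hv, by simp [hi]⟩
  choose c hc hright using hpiece
  have hlevel : level c = j := by
    rw [← hcard, level]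
    simp only [hright]
  exact ⟨c, hx, fun i => hlevel ▸ hc i⟩

end LebesgueSharp

open LebesgueSharp in
/-- Sharpness of Lebesgue's theorem: the unit `n`-cube can be covered by finitely
many closed sets of diameter at most `1 + ε` meeting at most `n` at a point. -/
theorem lebesgue_sharp (n : ℕ) (hn : 1 ≤ n) (ε : ℝ) (hε : 0 < ε)
    (C : Set (EuclideanSpace ℝ (Fin n)))
    (hC : C = {x | ∀ i, x i ∈ Set.Icc (0:ℝ) 1}) :
    ∃ (m : ℕ) (A : Fin m → Set (EuclideanSpace ℝ (Fin n))),
      (∀ j, IsClosed (A j)) ∧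
      (⋃ j, A j) = C ∧
      (∀ j, Metric.diam (A j) ≤ 1 + ε) ∧
      (∀ x : EuclideanSpace ℝ (Fin n),
        ∀ s : Finset (Fin m), (∀ j ∈ s, x ∈ A j) → s.card ≤ n) := by
  subst hC
  obtain ⟨d, rfl⟩ : ∃ d, n = d + 1 := ⟨n - 1, by omega⟩
  obtain ⟨N, hN⟩ := exists_nat_gt ((d : ℝ) / ε)
  have hN0 : (0 : ℝ) < N := (div_nonneg d.cast_nonneg hε.le).trans_lt hN
  have hdN : (d : ℝ) / N ^ 2 ≤ ε := calc
    (d : ℝ) / N ^ 2 ≤ d / N := div_le_div_of_nonneg_left d.cast_nonneg hN0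
      (le_self_pow₀ (by exact_mod_cast hN0) two_ne_zero)
    _ ≤ ε := by rw [div_lt_iff₀ hε] at hN; rw [div_le_iff₀ hN0]; linarith
  let e := (Fintype.equivFin (Fin d → Fin (N + 1) ⊕ Fin N)).symm
  refine ⟨_, fun j => brick (e j), fun j => isClosed_brick _, ?_, fun j => ?_, fun x s hs => ?_⟩
  · ext x
    refine ⟨fun hx => ?_, fun hx => ?_⟩
    · obtain ⟨j, hj⟩ := mem_iUnion.mp hx
      exact hj.1
    · obtain ⟨c, hc⟩ := exists_mem_brick (N := N) hx
      exact mem_iUnion.mpr ⟨e.symm c, by simpa using hc⟩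
  · refine diam_le_of_forall_dist_le (by linarith) fun x hx y hy =>
      (dist_le_of_mem_brick (by exact_mod_cast hN0) hx hy).trans ?_
    rw [Real.sqrt_le_iff]
    constructor <;> nlinarith
  · rw [← Finset.card_map e.toEmbedding]
    refine card_le_of_forall_mem_brick x _ fun c hc => ?_
    obtain ⟨j, hj, rfl⟩ := Finset.mem_map.mp hc
    exact hs j hj
end

section
/- If $B\subset S^{n-1}$ is not contained in any open hemisphere, then the diameter of $B$ is at least $\sqrt{2+2/n}$, with equality only if the closure of $B$ contains (indeed equals, when $B$ is closed) the vertex set of a regular $n$-simplex inscribed in $S^{n-1}$. -/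
open Metric Set
open scoped RealInnerProductSpace

/-!
A hyperplane separating `0` from the compact convex set `convexHull (closure B)` would put `B` in
an open hemisphere, so by Carathéodory `0 = ∑ wᵢ zᵢ` with `wᵢ > 0`, `∑ wᵢ = 1` and `k ≤ n + 1`
affinely independent points `zᵢ ∈ closure B`. For unit vectors with
barycentre `0` the variance identity gives `∑ᵢⱼ wᵢ wⱼ ‖zᵢ - zⱼ‖² = 2`, and since only the
off-diagonal terms contribute, `2 ≤ d² (1 - ∑ wᵢ²) ≤ d² (1 - 1/(n+1))` by Cauchy–Schwarz, i.e.
`d² ≥ 2 + 2/n`.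
In the equality case `k = n + 1` and every `‖zᵢ - zⱼ‖` equals `d`, so the `zᵢ` are the vertices of
an inscribed regular simplex. A further unit vector `x ∈ B` is within `d` of every vertex, which
makes its barycentric coordinates nonnegative; but a unit vector in the convex hull of unit
vectors is one of them, by strict convexity of the ball.
-/

theorem IsCompact.convexHull {E : Type*} [NormedAddCommGroup E] [NormedSpace ℝ E]
    [FiniteDimensional ℝ E] {K : Set E} (hK : IsCompact K) : IsCompact (convexHull ℝ K) := by
  classical
  let sum (k : ℕ) (p : (Fin k → ℝ) × (Fin k → E)) : E := ∑ i, p.1 i • p.2 i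
  -- Carathéodory: `Module.finrank ℝ E + 1` points suffice.
  have hK_hull : _root_.convexHull ℝ K = ⋃ k ∈ Finset.range (Module.finrank ℝ E + 2),
      sum k '' (stdSimplex ℝ (Fin k) ×ˢ univ.pi fun _ => K) := by
    refine Subset.antisymm (fun x hx => ?_) ?_
    · obtain ⟨ι, _, z, w, hzK, hz, hw_pos, hw_sum, rfl⟩ := eq_pos_convex_span_of_mem_convexHull hx
      have hcard : Fintype.card ι ≤ Module.finrank ℝ E + 1 :=
        hz.card_le_finrank_succ.trans (Nat.succ_le_succ (Submodule.finrank_le _))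
      let e := (Fintype.equivFin ι).symm
      refine mem_biUnion (x := Fintype.card ι) (by simpa [Nat.lt_succ_iff] using hcard)
        ⟨(w ∘ e, z ∘ e), ⟨⟨fun i => (hw_pos _).le, ?_⟩, fun i _ => hzK ⟨_, rfl⟩⟩, ?_⟩
      · simpa [Function.comp_def, e.sum_comp] using hw_sum
      · simpa [sum, Function.comp_def] using e.sum_comp fun i => w i • z i
    · refine iUnion₂_subset fun k _ => ?_
      rintro _ ⟨⟨w, z⟩, ⟨⟨hw_nonneg, hw_sum⟩, hzK⟩, rfl⟩
      exact (convex_convexHull ℝ K).sum_mem (fun i _ => hw_nonneg i) hw_sum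
        fun i _ => subset_convexHull ℝ K (hzK i (mem_univ i))
  rw [hK_hull]
  exact (Finset.range _).isCompact_biUnion fun k _ =>
    ((isCompact_stdSimplex ℝ _).prod (isCompact_univ_pi fun _ => hK)).image (by fun_prop)

theorem mem_of_mem_convexHull_of_norm_eq_one {E : Type*} [NormedAddCommGroup E] [NormedSpace ℝ E]
    [StrictConvexSpace ℝ E] {s : Set E} (hs : s ⊆ sphere 0 1) {x : E} (hx : x ∈ convexHull ℝ s)
    (hx_norm : ‖x‖ = 1) : x ∈ s := by
  have hx_ext : x ∈ extremePoints ℝ (closedBall (0 : E) 1) :=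
    StrictConvexSpace.sphere_subset_extremePoints_closedBall 0 one_ne_zero (by simpa using hx_norm)
  refine extremePoints_convexHull_subset
    (inter_extremePoints_subset_extremePoints_of_subset ?_ ⟨hx, hx_ext⟩)
  exact convexHull_min (hs.trans sphere_subset_closedBall) (convex_closedBall 0 1)

section InnerProductSpace

variable {F : Type*} [NormedAddCommGroup F] [InnerProductSpace ℝ F]

theorem zero_mem_convexHull_closure_of_not_exists_inner_pos [FiniteDimensional ℝ F]
    [Nontrivial F] {s : Set F} (hs : Bornology.IsBounded s)
    (h : ¬∃ v : F, v ≠ 0 ∧ ∀ x ∈ s, 0 < ⟪v, x⟫) : (0 : F) ∈ convexHull ℝ (closure s) := by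
  rcases s.eq_empty_or_nonempty with rfl | ⟨x₀, hx₀⟩
  · obtain ⟨v, hv⟩ := exists_ne (0 : F)
    exact absurd ⟨v, hv, by simp⟩ h
  by_contra h₀
  obtain ⟨f, u, hfu, hf⟩ := geometric_hahn_banach_point_closed (convex_convexHull ℝ _)
    hs.isCompact_closure.convexHull.isClosed h₀
  set v := (InnerProductSpace.toDual ℝ F).symm f
  have hv : ∀ x ∈ s, 0 < ⟪v, x⟫ := fun x hx => by
    rw [InnerProductSpace.toDual_symm_apply, ← map_zero f]
    exact hfu.trans (hf x (subset_convexHull ℝ _ (subset_closure hx)))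
  exact h ⟨v, fun hv₀ => by simpa [hv₀] using hv x₀ hx₀, hv⟩

theorem inner_eq_one_sub_norm_sub_sq_div_two {x y : F} (hx : ‖x‖ = 1) (hy : ‖y‖ = 1) :
    ⟪x, y⟫ = 1 - ‖x - y‖ ^ 2 / 2 := by
  rw [norm_sub_sq_real, hx, hy]; ring

section Family

variable {ι : Type*} [Fintype ι]

theorem sum_sum_mul_norm_sub_sq (w : ι → ℝ) (z : ι → F) (hw : ∑ i, w i = 1) :
    ∑ i, ∑ j, w i * w j * ‖z i - z j‖ ^ 2
      = 2 * (∑ i, w i * ‖z i‖ ^ 2 - ‖∑ i, w i • z i‖ ^ 2) := by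
  have hsq : ‖∑ i, w i • z i‖ ^ 2 = ∑ i, ∑ j, w i * w j * ⟪z i, z j⟫ := by
    simp only [← real_inner_self_eq_norm_sq, sum_inner, inner_sum, real_inner_smul_left,
      real_inner_smul_right, mul_assoc]
    exact Finset.sum_congr rfl fun i _ => Finset.sum_congr rfl fun j _ => by rw [real_inner_comm]
  simp only [hsq, norm_sub_sq_real, mul_add, mul_sub, Finset.sum_add_distrib,
    Finset.sum_sub_distrib]
  simp only [mul_assoc, ← Finset.mul_sum, ← Finset.sum_mul, hw]
  simp only [one_mul, mul_left_comm _ (2 : ℝ), ← Finset.mul_sum]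
  ring

theorem two_le_sq_mul_one_sub_sum_sq {w : ι → ℝ} {z : ι → F} {d : ℝ} (hw_nonneg : ∀ i, 0 ≤ w i)
    (hw_sum : ∑ i, w i = 1) (hz_norm : ∀ i, ‖z i‖ = 1) (hz_sum : ∑ i, w i • z i = 0)
    (hz_dist : ∀ i j, ‖z i - z j‖ ≤ d) :
    2 ≤ d ^ 2 * (1 - ∑ i, w i ^ 2) ∧
      (d ^ 2 * (1 - ∑ i, w i ^ 2) = 2 → ∀ i j, i ≠ j → 0 < w i * w j → ‖z i - z j‖ = d) := by
  classical
  let gap i j := w i * w j * (d ^ 2 - (if i = j then d ^ 2 else 0) - ‖z i - z j‖ ^ 2)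
  have hgap_nonneg : ∀ p : ι × ι, 0 ≤ gap p.1 p.2 := by
    rintro ⟨i, j⟩
    refine mul_nonneg (mul_nonneg (hw_nonneg i) (hw_nonneg j)) (sub_nonneg.2 ?_)
    split_ifs with h
    · simp [show i = j from h]
    · simpa using pow_le_pow_left₀ (norm_nonneg _) (hz_dist i j) 2
  have hgap_sum : ∑ p : ι × ι, gap p.1 p.2 = d ^ 2 * (1 - ∑ i, w i ^ 2) - 2 := by
    have hvar := sum_sum_mul_norm_sub_sq w z hw_sum
    simp only [hz_norm, hz_sum, norm_zero] at hvar
    simp only [gap, Fintype.sum_prod_type, mul_sub, Finset.sum_sub_distrib, hvar, mul_ite, mul_zero,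
      Finset.sum_ite_eq, Finset.mem_univ, if_true, ← Finset.sum_mul, ← Finset.mul_sum, hw_sum]
    simp only [← sq]
    ring
  refine ⟨by linarith [Finset.sum_nonneg fun p (_ : p ∈ Finset.univ) => hgap_nonneg p],
    fun h i j hij hw => ?_⟩
  have hgap_zero := (Fintype.sum_eq_zero_iff_of_nonneg
    (f := fun p : ι × ι => gap p.1 p.2) hgap_nonneg).1 (by linarith)
  have hgap_ij := congrFun hgap_zero (i, j)
  simp only [gap, if_neg hij, Pi.zero_apply, mul_eq_zero, hw.ne', false_or, sub_eq_zero] at hgap_ij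
  nlinarith [hz_dist i j, norm_nonneg (z i - z j)]

theorem AffineIndependent.two_add_two_div_finrank_le_sq [FiniteDimensional ℝ F] {w : ι → ℝ}
    {z : ι → F} {d : ℝ} (hz : AffineIndependent ℝ z) (hw_pos : ∀ i, 0 < w i)
    (hw_sum : ∑ i, w i = 1) (hz_norm : ∀ i, ‖z i‖ = 1) (hz_sum : ∑ i, w i • z i = 0)
    (hz_dist : ∀ i j, ‖z i - z j‖ ≤ d) :
    2 + 2 / Module.finrank ℝ F ≤ d ^ 2 ∧
      (d ^ 2 = 2 + 2 / Module.finrank ℝ F →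
        Fintype.card ι = Module.finrank ℝ F + 1 ∧ ∀ i j, i ≠ j → ‖z i - z j‖ = d) := by
  set n := Module.finrank ℝ F
  set S := ∑ i, w i ^ 2
  obtain ⟨hgap, hgap_eq⟩ :=
    two_le_sq_mul_one_sub_sum_sq (fun i => (hw_pos i).le) hw_sum hz_norm hz_sum hz_dist
  have hcard : Fintype.card ι ≤ n + 1 :=
    hz.card_le_finrank_succ.trans (Nat.succ_le_succ (Submodule.finrank_le _))
  have hS_card : 1 ≤ Fintype.card ι * S := by
    simpa [hw_sum] using sq_sum_le_card_mul_sum_sq (s := Finset.univ) (f := w)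
  have hS_nonneg : 0 ≤ S := Finset.sum_nonneg fun i _ => sq_nonneg (w i)
  have hS : 1 ≤ (n + 1) * S := hS_card.trans
    (mul_le_mul_of_nonneg_right (by exact_mod_cast hcard) hS_nonneg)
  have hkey : 2 * (n + 1) ≤ d ^ 2 * n := by nlinarith
  have hn : (0 : ℝ) < n := by
    rcases (Nat.cast_nonneg (α := ℝ) n).eq_or_lt with h | h
    · rw [← h] at hkey; linarith
    · exact h
  have h_two_add : 2 + 2 / (n : ℝ) = 2 * (n + 1) / n := by field_simp
  refine ⟨by rwa [h_two_add, div_le_iff₀ hn], fun hd => ?_⟩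
  rw [h_two_add, eq_div_iff hn.ne'] at hd
  have hS_eq : (n + 1) * S = 1 := by nlinarith
  have hcard_ge : (n + 1 : ℝ) ≤ Fintype.card ι := by nlinarith
  refine ⟨le_antisymm hcard (by exact_mod_cast hcard_ge), fun i j hij => ?_⟩
  exact hgap_eq (by nlinarith) i j hij (mul_pos (hw_pos i) (hw_pos j))

theorem mem_range_of_norm_sub_le {w : ι → F} {d : ℝ} (hd : 0 < d) (hw_norm : ∀ i, ‖w i‖ = 1)
    (hw_dist : ∀ i j, i ≠ j → ‖w i - w j‖ = d) {x : F} (hx_span : x ∈ affineSpan ℝ (range w))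
    (hx_norm : ‖x‖ = 1) (hx_dist : ∀ i, ‖x - w i‖ ≤ d) : x ∈ range w := by
  classical
  set c := 1 - d ^ 2 / 2
  have hw_gram : ∀ i j, ⟪w j, w i⟫ = c + (1 - c) * if j = i then 1 else 0 := fun i j => by
    split_ifs with h
    · rw [h, real_inner_self_eq_norm_sq, hw_norm]; ring
    · rw [inner_eq_one_sub_norm_sub_sq_div_two (hw_norm j) (hw_norm i), hw_dist j i h]; ring
  obtain ⟨μ, hμ_sum, rfl⟩ := eq_affineCombination_of_mem_affineSpan_of_fintype hx_span
  rw [Finset.affineCombination_eq_linear_combination _ _ _ hμ_sum] at hx_norm hx_dist ⊢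
  have hx_inner : ∀ i, ⟪∑ j, μ j • w j, w i⟫ = c + (1 - c) * μ i := fun i => by
    simp only [sum_inner, real_inner_smul_left, hw_gram i, mul_add, Finset.sum_add_distrib,
      ← Finset.sum_mul, hμ_sum, mul_ite, mul_one, mul_zero, Finset.sum_ite_eq', Finset.mem_univ,
      if_true]
    ring
  have hμ_nonneg : ∀ i, 0 ≤ μ i := fun i => by
    have h := hx_inner i
    rw [inner_eq_one_sub_norm_sub_sq_div_two hx_norm (hw_norm i)] at h
    have h_sq := pow_le_pow_left₀ (norm_nonneg _) (hx_dist i) 2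
    have hc : 0 < 1 - c := by simp only [c, sub_sub_cancel]; positivity
    exact (mul_nonneg_iff_of_pos_left hc).1 (by simp only [c] at h ⊢; linarith)
  refine mem_of_mem_convexHull_of_norm_eq_one ?_ ((convex_convexHull ℝ _).sum_mem
    (fun i _ => hμ_nonneg i) hμ_sum fun i _ => subset_convexHull ℝ _ ⟨i, rfl⟩) hx_norm
  rintro _ ⟨i, rfl⟩
  simpa using hw_norm i

end Family

end InnerProductSpace

/-- If `B ⊆ Sⁿ⁻¹` is contained in no open hemisphere, then `diam B ≥ √(2 + 2/n)`,
with equality only if the closure of `B` contains (and, if `B` is closed, equals)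
the vertex set of an inscribed regular `n`-simplex. -/
theorem hemisphere_free_diameter_bound (n : ℕ) (hn : 1 ≤ n)
    (B : Set (EuclideanSpace ℝ (Fin n)))
    (hB : B ⊆ Metric.sphere (0 : EuclideanSpace ℝ (Fin n)) 1)
    (hhemi : ¬ ∃ v : EuclideanSpace ℝ (Fin n), v ≠ 0 ∧ ∀ x ∈ B, 0 < (inner ℝ v x : ℝ)) :
    Real.sqrt (2 + 2 / n) ≤ Metric.diam B ∧
      (Metric.diam B = Real.sqrt (2 + 2 / n) →
        ∃ w : Fin (n + 1) → EuclideanSpace ℝ (Fin n),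
          (∀ i, ‖w i‖ = 1) ∧
          (∀ i j, i ≠ j → (inner ℝ (w i) (w j) : ℝ) = -1 / n) ∧
          Set.range w ⊆ closure B ∧
          (IsClosed B → B = Set.range w)) := by
  have : NeZero n := ⟨by omega⟩
  have hB_bdd : Bornology.IsBounded B := isBounded_sphere.subset hB
  have hB_closure : closure B ⊆ sphere 0 1 := closure_minimal hB isClosed_sphere
  obtain ⟨ι, _, z, w, hzB, hz, hw_pos, hw_sum, hz_sum⟩ := eq_pos_convex_span_of_mem_convexHull
    (zero_mem_convexHull_closure_of_not_exists_inner_pos hB_bdd hhemi)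
  have hz_norm : ∀ i, ‖z i‖ = 1 := fun i => by simpa using hB_closure (hzB ⟨i, rfl⟩)
  have hz_dist : ∀ i j, ‖z i - z j‖ ≤ diam B := fun i j => by
    rw [← dist_eq_norm, ← diam_closure]
    exact dist_le_diam_of_mem hB_bdd.closure (hzB ⟨i, rfl⟩) (hzB ⟨j, rfl⟩)
  obtain ⟨hle, heq⟩ := hz.two_add_two_div_finrank_le_sq hw_pos hw_sum hz_norm hz_sum hz_dist
  rw [finrank_euclideanSpace_fin] at hle heq
  refine ⟨Real.sqrt_le_iff.2 ⟨diam_nonneg, hle⟩, fun hd => ?_⟩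
  have hd_sq : diam B ^ 2 = 2 + 2 / n := by rw [hd, Real.sq_sqrt (by positivity)]
  obtain ⟨hcard, hz_eq⟩ := heq hd_sq
  let e : Fin (n + 1) ≃ ι := (Fintype.equivFinOfCardEq hcard).symm
  have hz_inner : ∀ i j, i ≠ j → ⟪z i, z j⟫ = -1 / n := fun i j hij => by
    rw [inner_eq_one_sub_norm_sub_sq_div_two (hz_norm i) (hz_norm j), hz_eq i j hij, hd_sq]
    field_simp
    ring
  refine ⟨z ∘ e, fun i => hz_norm _, fun i j hij => hz_inner _ _ (e.injective.ne hij),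
    (range_comp_subset_range e z).trans hzB, fun hB_closed => ?_⟩
  rw [hB_closed.closure_eq] at hzB
  rw [e.surjective.range_comp]
  have hz_span : affineSpan ℝ (range z) = ⊤ :=
    hz.affineSpan_eq_top_iff_card_eq_finrank_add_one.2 (by rw [finrank_euclideanSpace_fin, hcard])
  refine Subset.antisymm (fun x hx => mem_range_of_norm_sub_le (hd ▸ by positivity) hz_norm hz_eq
    (hz_span ▸ AffineSubspace.mem_top ℝ _ x) (by simpa using hB hx)
    fun i => dist_eq_norm x (z i) ▸ dist_le_diam_of_mem hB_bdd hx (hzB ⟨i, rfl⟩)) hzB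
end

section
/- Let $C\subset S^{n-1}$ be a finite set not contained in any open hemisphere, and suppose $C$ is contained in the closed hemisphere $\{x:\langle v,x\rangle\ge 0\}$ for some $v\ne 0$. Then the set $C\cap\{x:\langle v,x\rangle=0\}$ (the intersection of $C$ with the bounding great subsphere) is itself not contained in any open hemisphere of that great subsphere $S^{n-2}$. -/
/-! Tilt the hemisphere of the great subsphere towards `v`: if `w ⊥ v` is positive on
`C ∩ v^⊥`, then `w + t • v` is positive on all of `C` once `t` is large, because each point
of `C` off `v^⊥` has `⟪v, x⟫ > 0` and there are only finitely many of them. Moreover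
`w + t • v ≠ 0` for `t ≠ 0`, so `C` would lie in an open hemisphere. -/

open Filter

section Tilt

variable {E : Type*} [NormedAddCommGroup E] [InnerProductSpace ℝ E]

theorem eventually_pos_inner_add_smul {v w x : E} (hvx : 0 ≤ inner ℝ v x)
    (hwx : inner ℝ v x = 0 → 0 < inner ℝ w x) :
    ∀ᶠ t : ℝ in atTop, 0 < inner ℝ (w + t • v) x := by
  simp only [inner_add_left, real_inner_smul_left]
  rcases hvx.eq_or_lt with hvx | hvx
  · simp only [← hvx, mul_zero, add_zero]
    exact .of_forall fun _ => hwx hvx.symm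
  · exact (tendsto_atTop_add_const_left _ _
      (tendsto_id.atTop_mul_const hvx)).eventually_gt_atTop 0

theorem add_smul_ne_zero_of_inner_eq_zero {v w : E} (hv : v ≠ 0) (hvw : inner ℝ v w = 0)
    {t : ℝ} (ht : t ≠ 0) : w + t • v ≠ 0 := by
  intro h
  have hinner : inner ℝ v (w + t • v) = t * ‖v‖ ^ 2 := by
    rw [inner_add_right, real_inner_smul_right, hvw, real_inner_self_eq_norm_sq, zero_add]
  rw [h, inner_zero_right] at hinner
  exact mul_ne_zero ht (pow_ne_zero 2 (norm_ne_zero_iff.mpr hv)) hinner.symm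

end Tilt

theorem boundary_trace_not_in_open_hemisphere_general (n : ℕ)
    (C : Set (EuclideanSpace ℝ (Fin n))) (hCfin : C.Finite)
    (hhemi : ¬ ∃ u : EuclideanSpace ℝ (Fin n), u ≠ 0 ∧ ∀ x ∈ C, 0 < (inner ℝ u x : ℝ))
    (v : EuclideanSpace ℝ (Fin n)) (hv : v ≠ 0)
    (hCv : ∀ x ∈ C, 0 ≤ (inner ℝ v x : ℝ)) :
    ¬ ∃ w : EuclideanSpace ℝ (Fin n), w ≠ 0 ∧ (inner ℝ v w : ℝ) = 0 ∧
        ∀ x ∈ C, (inner ℝ v x : ℝ) = 0 → 0 < (inner ℝ w x : ℝ) := by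
  rintro ⟨w, -, hvw, hw⟩
  have hC : ∀ᶠ t : ℝ in atTop, ∀ x ∈ C, 0 < inner ℝ (w + t • v) x :=
    hCfin.eventually_all.2 fun x hx => eventually_pos_inner_add_smul (hCv x hx) (hw x hx)
  obtain ⟨t, ht, htC⟩ := ((eventually_gt_atTop 0).and hC).exists
  exact hhemi ⟨w + t • v, add_smul_ne_zero_of_inner_eq_zero hv hvw ht.ne', htC⟩

/-- If a finite set `C ⊆ Sⁿ⁻¹` is contained in no open hemisphere but lies in the
closed hemisphere `{x | ⟪v,x⟫ ≥ 0}`, then `C` intersected with the bounding great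
subsphere `{x | ⟪v,x⟫ = 0}` is contained in no open hemisphere of that subsphere. -/
theorem boundary_trace_not_in_open_hemisphere (n : ℕ)
    (C : Set (EuclideanSpace ℝ (Fin n))) (hCfin : C.Finite)
    (hC : C ⊆ Metric.sphere (0 : EuclideanSpace ℝ (Fin n)) 1)
    (hhemi : ¬ ∃ u : EuclideanSpace ℝ (Fin n), u ≠ 0 ∧ ∀ x ∈ C, 0 < (inner ℝ u x : ℝ))
    (v : EuclideanSpace ℝ (Fin n)) (hv : v ≠ 0)
    (hCv : ∀ x ∈ C, 0 ≤ (inner ℝ v x : ℝ)) :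
    ¬ ∃ w : EuclideanSpace ℝ (Fin n), w ≠ 0 ∧ (inner ℝ v w : ℝ) = 0 ∧
        ∀ x ∈ C, (inner ℝ v x : ℝ) = 0 → 0 < (inner ℝ w x : ℝ) :=
  boundary_trace_not_in_open_hemisphere_general n C hCfin hhemi v hv hCv
end

section
/- If a subset $B$ of the unit circle $S^1$ is not contained in any open semicircle, then $\mathrm{diam}(B)\ge\sqrt{3}$, with equality exactly when the closure of $B$ is the vertex set of an inscribed equilateral triangle. -/
open Metric Set
open scoped RealInnerProductSpace

/-!
Choose `x, y` in the compact set `closure B` minimising `⟪x, y⟫`; on the unit circle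
`dist x y = √(2 - 2⟪x, y⟫)`, so this pair realises `diam B`. Some `z ∈ closure B` lies in the closed
half-plane `⟪x + y, z⟫ ≤ 0`, while `⟪x, z⟫, ⟪y, z⟫ ≥ ⟪x, y⟫`; as three vectors of `ℝ²` have a
vanishing Gram determinant, this forces `⟪x, y⟫ ≤ -1/2`. When `⟪x, y⟫ = -1/2`, the same identity
leaves only `x`, `y` and `-(x + y)` as possible points of `closure B`, and the half-plane condition
forces `-(x + y)` to be one of them.
-/

section UnitVectors

variable {E : Type*} [NormedAddCommGroup E] [InnerProductSpace ℝ E] {x y p q : E}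

theorem dist_eq_sqrt_of_norm_eq_one (hx : ‖x‖ = 1) (hy : ‖y‖ = 1) :
    dist x y = √(2 - 2 * ⟪x, y⟫) := by
  rw [dist_eq_norm, ← Real.sqrt_sq (norm_nonneg _), norm_sub_sq_real, hx, hy]
  ring_nf

theorem dist_le_dist_iff_inner_le_inner (hx : ‖x‖ = 1) (hy : ‖y‖ = 1) (hp : ‖p‖ = 1)
    (hq : ‖q‖ = 1) : dist p q ≤ dist x y ↔ ⟪x, y⟫ ≤ ⟪p, q⟫ := by
  have hxy := real_inner_le_one_of_norm_eq_one hx hy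
  rw [dist_eq_sqrt_of_norm_eq_one hp hq, dist_eq_sqrt_of_norm_eq_one hx hy,
    Real.sqrt_le_sqrt_iff (by linarith)]
  constructor <;> intro h <;> linarith

theorem sqrt_three_le_dist_iff (hx : ‖x‖ = 1) (hy : ‖y‖ = 1) :
    √3 ≤ dist x y ↔ ⟪x, y⟫ ≤ -1 / 2 := by
  rw [dist_eq_sqrt_of_norm_eq_one hx hy,
    Real.sqrt_le_sqrt_iff (by linarith [real_inner_le_one_of_norm_eq_one hx hy])]
  constructor <;> intro h <;> linarith

theorem dist_eq_sqrt_three_iff (hx : ‖x‖ = 1) (hy : ‖y‖ = 1) :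
    dist x y = √3 ↔ ⟪x, y⟫ = -1 / 2 := by
  rw [dist_eq_sqrt_of_norm_eq_one hx hy,
    Real.sqrt_inj (by linarith [real_inner_le_one_of_norm_eq_one hx hy]) (by norm_num)]
  constructor <;> intro h <;> linarith

theorem norm_neg_add_eq_one_of_inner_eq_neg_half (hx : ‖x‖ = 1) (hy : ‖y‖ = 1)
    (hxy : ⟪x, y⟫ = -1 / 2) : ‖-(x + y)‖ = 1 := by
  rw [norm_neg, ← sq_eq_sq₀ (norm_nonneg _) zero_le_one, norm_add_sq_real, hx, hy, hxy]
  norm_num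

theorem inner_neg_add_eq_neg_half (hx : ‖x‖ = 1) (hxy : ⟪x, y⟫ = -1 / 2) :
    ⟪x, -(x + y)⟫ = -1 / 2 := by
  rw [inner_neg_right, inner_add_right, real_inner_self_eq_norm_sq, hx, hxy]
  norm_num

end UnitVectors

theorem inner_gram_det_eq_zero (x y z : EuclideanSpace ℝ (Fin 2)) :
    ⟪x, x⟫ * ⟪y, y⟫ * ⟪z, z⟫ + 2 * ⟪x, y⟫ * ⟪y, z⟫ * ⟪x, z⟫ - ⟪x, x⟫ * ⟪y, z⟫ ^ 2
      - ⟪y, y⟫ * ⟪x, z⟫ ^ 2 - ⟪z, z⟫ * ⟪x, y⟫ ^ 2 = 0 := by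
  simp only [PiLp.inner_apply, Fin.sum_univ_two, RCLike.inner_apply, conj_trivial]
  ring

theorem inner_gram_det_eq_zero_of_norm_eq_one {x y z : EuclideanSpace ℝ (Fin 2)} (hx : ‖x‖ = 1)
    (hy : ‖y‖ = 1) (hz : ‖z‖ = 1) :
    ⟪x, z⟫ ^ 2 + ⟪y, z⟫ ^ 2 - 2 * ⟪x, y⟫ * ⟪x, z⟫ * ⟪y, z⟫ = 1 - ⟪x, y⟫ ^ 2 := by
  have h := inner_gram_det_eq_zero x y z
  simp only [real_inner_self_eq_norm_sq, hx, hy, hz] at h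
  linear_combination -h

theorem le_neg_half_of_gram_eq {a b c : ℝ} (h : a ^ 2 + b ^ 2 - 2 * c * a * b = 1 - c ^ 2)
    (ha : c ≤ a) (hb : c ≤ b) (hab : a + b ≤ 0) : c ≤ -1 / 2 := by
  by_contra! hc
  -- `a, b ∈ [c, -c]` turns `h` into `(2c + 1)(c - 1)² ≤ 0`.
  have hc0 : c ≤ 0 := by linarith
  have hprod : a * b ≤ c ^ 2 := by nlinarith
  nlinarith [mul_pos (by linarith : 0 < 2 * c + 1) (by nlinarith : 0 < (c - 1) ^ 2)]

theorem eq_one_or_eq_one_or_add_eq_neg_one {a b : ℝ} (h : a ^ 2 + a * b + b ^ 2 = 3 / 4)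
    (ha : -1 / 2 ≤ a) (hb : -1 / 2 ≤ b) (hab : a + b ≤ 1 / 2) :
    a = 1 ∨ b = 1 ∨ a + b = -1 := by
  have hfactor : (a + b + 1) * (a + b - 1 / 2) = (a + 1 / 2) * (b + 1 / 2) := by
    linear_combination h
  rcases hab.eq_or_lt with heq | hlt
  · have : (a + 1 / 2) * (b + 1 / 2) = 0 := by rw [← hfactor, heq]; ring
    rcases mul_eq_zero.1 this with h' | h'
    · right; left; linarith
    · left; linarith
  · right; right
    nlinarith [mul_nonneg (by linarith : (0 : ℝ) ≤ a + 1 / 2) (by linarith : (0 : ℝ) ≤ b + 1 / 2)]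

section Circle

variable {x y z : EuclideanSpace ℝ (Fin 2)}

theorem inner_le_neg_half_of_inner_add_nonpos (hx : ‖x‖ = 1) (hy : ‖y‖ = 1) (hz : ‖z‖ = 1)
    (hxz : ⟪x, y⟫ ≤ ⟪x, z⟫) (hyz : ⟪x, y⟫ ≤ ⟪y, z⟫) (h : ⟪x + y, z⟫ ≤ 0) :
    ⟪x, y⟫ ≤ -1 / 2 := by
  rw [inner_add_left] at h
  exact le_neg_half_of_gram_eq
    (by linear_combination inner_gram_det_eq_zero_of_norm_eq_one hx hy hz) hxz hyz h

theorem eq_or_eq_or_eq_neg_add_of_inner_eq_neg_half (hx : ‖x‖ = 1) (hy : ‖y‖ = 1)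
    (hz : ‖z‖ = 1) (hxy : ⟪x, y⟫ = -1 / 2) (hxz : -1 / 2 ≤ ⟪x, z⟫) (hyz : -1 / 2 ≤ ⟪y, z⟫)
    (h : -1 / 2 ≤ ⟪-(x + y), z⟫) : z = x ∨ z = y ∨ z = -(x + y) := by
  have hgram := inner_gram_det_eq_zero_of_norm_eq_one hx hy hz
  rw [hxy] at hgram
  rw [inner_neg_left, inner_add_left] at h
  rcases eq_one_or_eq_one_or_add_eq_neg_one (by linear_combination hgram) hxz hyz (by linarith)
    with h1 | h1 | h1
  · exact Or.inl ((inner_eq_one_iff_of_norm_eq_one (𝕜 := ℝ) hx hz).1 h1).symm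
  · exact Or.inr (Or.inl ((inner_eq_one_iff_of_norm_eq_one (𝕜 := ℝ) hy hz).1 h1).symm)
  · refine Or.inr (Or.inr ((inner_eq_one_iff_of_norm_eq_one (𝕜 := ℝ)
      (norm_neg_add_eq_one_of_inner_eq_neg_half hx hy hxy) hz).1 ?_).symm)
    rw [inner_neg_left, inner_add_left]
    linarith

end Circle

section NoOpenSemicircle

variable {K : Set (EuclideanSpace ℝ (Fin 2))} (hK : K ⊆ sphere 0 1)
  (hsemi : ∀ v : EuclideanSpace ℝ (Fin 2), v ≠ 0 → ∃ z ∈ K, ⟪v, z⟫ ≤ 0) {x y}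
  (hx : x ∈ K) (hy : y ∈ K) (hmin : ∀ p ∈ K, ∀ q ∈ K, ⟪x, y⟫ ≤ ⟪p, q⟫)
include hK hsemi hx hy hmin

theorem inner_le_neg_half_of_forall_inner_le : ⟪x, y⟫ ≤ -1 / 2 := by
  have hn : ∀ p ∈ K, ‖p‖ = 1 := fun p hp => mem_sphere_zero_iff_norm.1 (hK hp)
  by_cases hv : x + y = 0
  · rw [(inner_eq_neg_one_iff_of_norm_eq_one (𝕜 := ℝ) (hn x hx) (hn y hy)).2
      (eq_neg_of_add_eq_zero_left hv)]
    norm_num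
  · obtain ⟨z, hz, hvz⟩ := hsemi _ hv
    exact inner_le_neg_half_of_inner_add_nonpos (hn x hx) (hn y hy) (hn z hz)
      (hmin x hx z hz) (hmin y hy z hz) hvz

theorem eq_triple_of_inner_eq_neg_half (hxy : ⟪x, y⟫ = -1 / 2) : K = {x, y, -(x + y)} := by
  have hn : ∀ p ∈ K, ‖p‖ = 1 := fun p hp => mem_sphere_zero_iff_norm.1 (hK hp)
  have hw := norm_neg_add_eq_one_of_inner_eq_neg_half (hn x hx) (hn y hy) hxy
  have hxw := inner_neg_add_eq_neg_half (hn x hx) hxy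
  have hyw := inner_neg_add_eq_neg_half (hn y hy) (real_inner_comm x y ▸ hxy)
  rw [add_comm y x] at hyw
  have hsub : ∀ z ∈ K, -1 / 2 ≤ ⟪-(x + y), z⟫ → z ∈ ({x, y, -(x + y)} : Set _) :=
    fun z hz => eq_or_eq_or_eq_neg_add_of_inner_eq_neg_half (hn x hx) (hn y hy) (hn z hz) hxy
      (hxy ▸ hmin x hx z hz) (hxy ▸ hmin y hy z hz)
  have hwK : -(x + y) ∈ K := by
    have hv : x + y ≠ 0 := fun h0 => by simp [h0] at hw
    obtain ⟨z, hz, hvz⟩ := hsemi _ hv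
    rcases hsub z hz (by rw [inner_neg_left]; linarith) with rfl | rfl | rfl
    · rw [real_inner_comm, ← neg_neg (z + y), inner_neg_right, hxw] at hvz
      norm_num at hvz
    · rw [real_inner_comm, ← neg_neg (x + z), inner_neg_right, hyw] at hvz
      norm_num at hvz
    · exact hz
  refine subset_antisymm (fun z hz => hsub z hz (hxy ▸ hmin _ hwK z hz)) ?_
  rintro z (rfl | rfl | rfl) <;> assumption

end NoOpenSemicircle

theorem IsCompact.exists_diam_eq_dist_forall_inner_le {K : Set (EuclideanSpace ℝ (Fin 2))}
    (hc : IsCompact K) (hne : K.Nonempty) (hK : K ⊆ sphere 0 1) :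
    ∃ x ∈ K, ∃ y ∈ K, diam K = dist x y ∧ ∀ p ∈ K, ∀ q ∈ K, ⟪x, y⟫ ≤ ⟪p, q⟫ := by
  have hn : ∀ p ∈ K, ‖p‖ = 1 := fun p hp => mem_sphere_zero_iff_norm.1 (hK hp)
  obtain ⟨⟨x, y⟩, ⟨hx, hy⟩, hxy⟩ := (hc.prod hc).exists_isMinOn (hne.prod hne)
    (continuous_inner.continuousOn (f := fun p : _ × _ => ⟪p.1, p.2⟫))
  have hmin : ∀ p ∈ K, ∀ q ∈ K, ⟪x, y⟫ ≤ ⟪p, q⟫ := fun p hp q hq => hxy (mk_mem_prod hp hq)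
  refine ⟨x, hx, y, hy, le_antisymm ?_ (dist_le_diam_of_mem hc.isBounded hx hy), hmin⟩
  exact diam_le_of_forall_dist_le dist_nonneg fun p hp q hq =>
    (dist_le_dist_iff_inner_le_inner (hn x hx) (hn y hy) (hn p hp) (hn q hq)).2 (hmin p hp q hq)

/-- A subset of the unit circle contained in no open semicircle has diameter at
least `√3`, with equality exactly when its closure is the vertex set of an
inscribed equilateral triangle. -/
theorem circle_no_semicircle_diam (B : Set (EuclideanSpace ℝ (Fin 2)))
    (hB : B ⊆ Metric.sphere (0 : EuclideanSpace ℝ (Fin 2)) 1)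
    (hsemi : ¬ ∃ v : EuclideanSpace ℝ (Fin 2), v ≠ 0 ∧ ∀ x ∈ B, 0 < (inner ℝ v x : ℝ)) :
    Real.sqrt 3 ≤ Metric.diam B ∧
      (Metric.diam B = Real.sqrt 3 ↔
        ∃ a b c : EuclideanSpace ℝ (Fin 2),
          ‖a‖ = 1 ∧ ‖b‖ = 1 ∧ ‖c‖ = 1 ∧
          dist a b = Real.sqrt 3 ∧ dist a c = Real.sqrt 3 ∧ dist b c = Real.sqrt 3 ∧
          closure B = {a, b, c}) := by
  push Not at hsemi
  have hK : closure B ⊆ sphere 0 1 := closure_minimal hB isClosed_sphere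
  have hsemiK : ∀ v : EuclideanSpace ℝ (Fin 2), v ≠ 0 → ∃ z ∈ closure B, ⟪v, z⟫ ≤ 0 :=
    fun v hv => (hsemi v hv).imp fun z hz => ⟨subset_closure hz.1, hz.2⟩
  obtain ⟨z, hz, -⟩ := hsemiK (EuclideanSpace.single 0 1) (by simp)
  obtain ⟨x, hx, y, hy, hdiam, hmin⟩ := (isCompact_sphere 0 1).of_isClosed_subset
    isClosed_closure hK |>.exists_diam_eq_dist_forall_inner_le ⟨z, hz⟩ hK
  rw [diam_closure] at hdiam
  have hnx : ‖x‖ = 1 := mem_sphere_zero_iff_norm.1 (hK hx)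
  have hny : ‖y‖ = 1 := mem_sphere_zero_iff_norm.1 (hK hy)
  refine ⟨?_, fun h => ?_, fun ⟨a, b, c, _, _, _, hab, hac, hbc, hcl⟩ => ?_⟩
  · rw [hdiam, sqrt_three_le_dist_iff hnx hny]
    exact inner_le_neg_half_of_forall_inner_le hK hsemiK hx hy hmin
  · rw [hdiam, dist_eq_sqrt_three_iff hnx hny] at h
    have hw := norm_neg_add_eq_one_of_inner_eq_neg_half hnx hny h
    refine ⟨x, y, -(x + y), hnx, hny, hw, (dist_eq_sqrt_three_iff hnx hny).2 h,
      (dist_eq_sqrt_three_iff hnx hw).2 (inner_neg_add_eq_neg_half hnx h), ?_,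
      eq_triple_of_inner_eq_neg_half hK hsemiK hx hy hmin h⟩
    rw [dist_eq_sqrt_three_iff hny hw, add_comm]
    exact inner_neg_add_eq_neg_half hny (real_inner_comm x y ▸ h)
  · rw [← diam_closure, hcl, diam_triple, hab, hac, hbc, max_self, max_self]
end
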